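/- For every integer j ≥ 0 and every complex number q with 0 < |q| < 1, the following identity holds: ∑_{i=j}^{∞} (−1)^{i+j} q^{−(i−j)(i+j−1)/2} C_q(2i, i−j) · ([2j+1]_q / [i+j+1]_q) · (−1)^i q^{i(i+1)/2}/(q^{i+1};q)_i = (q^{−j²} − q^{−(j+1)²}) · ( ∑_{k∈ℤ, |k|>j} (−1)^k q^{k(3k+1)/2} ) / (q;q)_∞, both sides being absolutely convergent. -/

import Mathlib

/-- The q-Pochhammer symbol `(a;q)_m = ∏_{l=0}^{m-1} (1 - a q^l)`. -/
noncomputable def qPoch (a q : ℂ) (m : ℕ) : ℂ := ∏ l ∈ Finset.range m, (1 - a * q ^ l)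

/-- The Gaussian binomial coefficient `C_q(m,r) = (q;q)_m / ((q;q)_r (q;q)_{m-r})`. -/
noncomputable def qBinom (q : ℂ) (m r : ℕ) : ℂ :=
  qPoch q q m / (qPoch q q r * qPoch q q (m - r))

/-- The q-integer `[m]_q = (1 - q^m)/(1 - q)`. -/
noncomputable def qInt (q : ℂ) (m : ℕ) : ℂ := (1 - q ^ m) / (1 - q)


/-!
Writing `i = j + m`, the `i`-th summand is
`(-1)^j q^{j(j+1)/2} (1 - q^{2j+1}) · q^m / ((q;q)_m (q^{j+m+1};q)_{j+1})`.
Expanding `1/(q^{j+m+1};q)_{j+1}` by the `q`-binomial theorem and then summing over `m` by Euler's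
identity `∑_m x^m/(q;q)_m = 1/(x;q)_∞` shows that `(q;q)_∞` times the series is
`G_j = ∑_r q^{(j+1)r} (q^{j+1};q)_r`. On the other side, the tail
`∑_{|k|>j} (-1)^k q^{k(3k+1)/2}` of the pentagonal series equals
`(-1)^{j+1} q^{(j+1)(3j+2)/2} G_j`: both sides tend to `0` as `j → ∞`, and they have the same
differences in `j` because of the recurrence `G_j = 1 + q^{j+1} - q^{3j+4} G_{j+1}`.
-/

open Filter Topology

section QPochhammer

variable {a q x : ℂ}

lemma qPoch_zero (a q : ℂ) : qPoch a q 0 = 1 := Finset.prod_range_zero _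

lemma qPoch_succ (a q : ℂ) (n : ℕ) : qPoch a q (n + 1) = qPoch a q n * (1 - a * q ^ n) :=
  Finset.prod_range_succ _ _

lemma qPoch_add (a q : ℂ) (m n : ℕ) :
    qPoch a q (m + n) = qPoch a q m * qPoch (a * q ^ m) q n := by
  simp only [qPoch, Finset.prod_range_add, pow_add, mul_assoc]

lemma qPoch_self_add (q : ℂ) (m n : ℕ) :
    qPoch q q (m + n) = qPoch q q m * qPoch (q ^ (m + 1)) q n := by
  rw [qPoch_add, ← pow_succ']

lemma norm_mul_lt_one (hq : ‖q‖ ≤ 1) (hx : ‖x‖ < 1) : ‖q * x‖ < 1 := by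
  rw [norm_mul]
  exact lt_of_le_of_lt (mul_le_of_le_one_left (norm_nonneg x) hq) hx

lemma norm_pow_succ_lt_one (hq : ‖q‖ < 1) (n : ℕ) : ‖q ^ (n + 1)‖ < 1 := by
  rw [norm_pow]
  exact pow_lt_one₀ (norm_nonneg q) hq n.succ_ne_zero

lemma one_sub_mul_pow_ne_zero (ha : ‖a‖ < 1) (hq : ‖q‖ ≤ 1) (n : ℕ) :
    1 - a * q ^ n ≠ 0 := by
  refine sub_ne_zero.2 fun h => (?_ : ‖a * q ^ n‖ < 1).ne' (by rw [← h, norm_one])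
  rw [mul_comm]
  exact norm_mul_lt_one (by simpa using pow_le_one₀ (norm_nonneg q) hq) ha

lemma qPoch_ne_zero (ha : ‖a‖ < 1) (hq : ‖q‖ ≤ 1) (n : ℕ) : qPoch a q n ≠ 0 :=
  Finset.prod_ne_zero_iff.2 fun l _ => one_sub_mul_pow_ne_zero ha hq l

lemma summable_norm_neg_mul_pow (hq : ‖q‖ < 1) (a : ℂ) :
    Summable fun l : ℕ => ‖-(a * q ^ l)‖ := by
  simpa [norm_mul, norm_pow] using
    (summable_geometric_of_lt_one (norm_nonneg q) hq).mul_left ‖a‖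

lemma norm_qPoch_le (hq : ‖q‖ < 1) (a : ℂ) (n : ℕ) :
    ‖qPoch a q n‖ ≤ Real.exp (‖a‖ / (1 - ‖q‖)) := by
  have hsum : ∑ l ∈ Finset.range n, ‖-(a * q ^ l)‖ ≤ ‖a‖ / (1 - ‖q‖) := by
    refine ((summable_norm_neg_mul_pow hq a).sum_le_tsum _ fun _ _ => norm_nonneg _).trans_eq ?_
    simp only [norm_neg, norm_mul, norm_pow, tsum_mul_left,
      tsum_geometric_of_lt_one (norm_nonneg q) hq, div_eq_mul_inv]
  have h := Finset.norm_prod_one_add_sub_one_le (Finset.range n) fun l => -(a * q ^ l)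
  simp only [← sub_eq_add_neg] at h
  calc ‖qPoch a q n‖ ≤ ‖qPoch a q n - 1‖ + 1 := by
        simpa using norm_le_norm_sub_add (qPoch a q n) 1
    _ ≤ Real.exp (‖a‖ / (1 - ‖q‖)) := by
        have := Real.exp_le_exp.2 hsum
        rw [qPoch]
        linarith

lemma multipliable_one_sub_mul_pow (hq : ‖q‖ < 1) (a : ℂ) :
    Multipliable fun l : ℕ => 1 - a * q ^ l := by
  simpa only [sub_eq_add_neg] using
    multipliable_one_add_of_summable (summable_norm_neg_mul_pow hq a)

lemma tendsto_qPoch (hq : ‖q‖ < 1) (a : ℂ) :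
    Tendsto (qPoch a q) atTop (𝓝 (∏' l : ℕ, (1 - a * q ^ l))) :=
  (multipliable_one_sub_mul_pow hq a).tendsto_prod_tprod_nat

lemma tprod_one_sub_mul_pow_ne_zero (hq : ‖q‖ < 1) (ha : ‖a‖ < 1) :
    ∏' l : ℕ, (1 - a * q ^ l) ≠ 0 := by
  simp only [sub_eq_add_neg]
  exact tprod_one_add_ne_zero_of_summable
    (fun l => by rw [← sub_eq_add_neg]; exact one_sub_mul_pow_ne_zero ha hq.le l)
    (summable_norm_neg_mul_pow hq a)

lemma exists_norm_inv_qPoch_le (hq : ‖q‖ < 1) (ha : ‖a‖ < 1) :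
    ∃ C, ∀ n, ‖(qPoch a q n)⁻¹‖ ≤ C := by
  have h := (tendsto_qPoch hq a).inv₀ (tprod_one_sub_mul_pow_ne_zero hq ha)
  obtain ⟨C, hC⟩ := isBounded_iff_forall_norm_le.1 (Metric.isBounded_range_of_tendsto _ h)
  exact ⟨C, fun n => hC _ ⟨n, rfl⟩⟩

lemma qPoch_mul_tprod_one_sub_mul_pow (hq : ‖q‖ < 1) (a : ℂ) (r : ℕ) :
    qPoch a q r * ∏' l : ℕ, (1 - a * q ^ r * q ^ l) = ∏' l : ℕ, (1 - a * q ^ l) := by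
  have hshift : (fun l : ℕ => 1 - a * q ^ r * q ^ l) = fun l => 1 - a * q ^ (l + r) := by
    ext l
    ring
  rw [hshift]
  exact Multipliable.prod_mul_tprod_nat_mul' (f := fun l => 1 - a * q ^ l)
    (hshift ▸ multipliable_one_sub_mul_pow hq (a * q ^ r))

end QPochhammer

section Euler

variable {q x : ℂ}

lemma summable_pow_div_qPoch (hq : ‖q‖ < 1) (hx : ‖x‖ < 1) :
    Summable fun m : ℕ => x ^ m / qPoch q q m := by
  obtain ⟨C, hC⟩ := exists_norm_inv_qPoch_le hq hq
  refine .of_norm_bounded ((summable_geometric_of_lt_one (norm_nonneg x) hx).mul_left C)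
    fun m => ?_
  rw [div_eq_mul_inv, norm_mul, norm_pow, mul_comm]
  exact mul_le_mul_of_nonneg_right (hC m) (pow_nonneg (norm_nonneg x) m)

lemma tsum_mul_pow_div_qPoch (hq : ‖q‖ < 1) (hx : ‖x‖ < 1) :
    ∑' m : ℕ, (q * x) ^ m / qPoch q q m = (1 - x) * ∑' m : ℕ, x ^ m / qPoch q q m := by
  have hs := summable_pow_div_qPoch hq hx
  have hs' := summable_pow_div_qPoch hq (norm_mul_lt_one hq.le hx)
  have hdiff : ∑' m : ℕ, (x ^ m / qPoch q q m - (q * x) ^ m / qPoch q q m)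
      = x * ∑' m : ℕ, x ^ m / qPoch q q m := by
    rw [(hs.sub hs').tsum_eq_zero_add, ← tsum_mul_left]
    simp only [pow_zero, sub_self, zero_add]
    refine tsum_congr fun m => ?_
    have h1 := qPoch_ne_zero hq hq.le m
    have h2 := one_sub_mul_pow_ne_zero hq hq.le m
    rw [qPoch_succ]
    field_simp
    ring
  rw [hs.tsum_sub hs'] at hdiff
  linear_combination -hdiff

lemma tsum_pow_mul_pow_div_qPoch (hq : ‖q‖ < 1) (hx : ‖x‖ < 1) (n : ℕ) :
    ∑' m : ℕ, (q ^ n * x) ^ m / qPoch q q m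
      = qPoch x q n * ∑' m : ℕ, x ^ m / qPoch q q m := by
  induction n with
  | zero => simp [qPoch_zero]
  | succ n ih =>
    have hnx : ‖q ^ n * x‖ < 1 :=
      norm_mul_lt_one (by simpa using pow_le_one₀ (norm_nonneg q) hq.le) hx
    rw [pow_succ', mul_assoc, tsum_mul_pow_div_qPoch hq hnx, ih, qPoch_succ]
    ring

lemma tendsto_tsum_pow_mul_pow_div_qPoch (hq : ‖q‖ < 1) (hx : ‖x‖ < 1) :
    Tendsto (fun n : ℕ => ∑' m : ℕ, (q ^ n * x) ^ m / qPoch q q m) atTop (𝓝 1) := by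
  obtain ⟨C, hC⟩ := exists_norm_inv_qPoch_le hq hq
  have hlim : ∑' m : ℕ, ((0 : ℂ) * x) ^ m / qPoch q q m = 1 := by
    rw [tsum_eq_single 0 fun m hm => by simp [zero_pow hm]]
    simp [qPoch_zero]
  rw [← hlim]
  refine tendsto_tsum_of_dominated_convergence
    ((summable_geometric_of_lt_one (norm_nonneg x) hx).mul_left C) (fun m => ?_) ?_
  · exact (((continuous_id.mul continuous_const).pow m).div_const _).tendsto 0 |>.comp
      (tendsto_pow_atTop_nhds_zero_of_norm_lt_one hq)
  · refine .of_forall fun n m => ?_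
    rw [div_eq_mul_inv, norm_mul, norm_pow, mul_comm]
    refine mul_le_mul (hC m) (pow_le_pow_left₀ (norm_nonneg _) ?_ m) (by positivity)
      ((norm_nonneg _).trans (hC 0))
    rw [norm_mul, norm_pow]
    exact mul_le_of_le_one_left (norm_nonneg x) (pow_le_one₀ (norm_nonneg q) hq.le)

theorem tprod_mul_tsum_pow_div_qPoch (hq : ‖q‖ < 1) (hx : ‖x‖ < 1) :
    (∏' l : ℕ, (1 - x * q ^ l)) * ∑' m : ℕ, x ^ m / qPoch q q m = 1 := by
  refine tendsto_nhds_unique ((tendsto_qPoch hq x).mul_const _) ?_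
  simpa only [tsum_pow_mul_pow_div_qPoch hq hx] using tendsto_tsum_pow_mul_pow_div_qPoch hq hx

lemma tprod_mul_tsum_pow_succ_div_qPoch (hq : ‖q‖ < 1) (r : ℕ) :
    (∏' l : ℕ, (1 - q ^ (l + 1))) * ∑' m : ℕ, (q ^ (r + 1)) ^ m / qPoch q q m
      = qPoch q q r := by
  simp_rw [pow_succ' q]
  rw [← qPoch_mul_tprod_one_sub_mul_pow hq q r, mul_assoc, ← pow_succ',
    tprod_mul_tsum_pow_div_qPoch hq (norm_pow_succ_lt_one hq r), mul_one]

end Euler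

section QBinomial

variable {q x : ℂ}

lemma qBinom_add_left (q : ℂ) (j r : ℕ) :
    qBinom q (j + r) r = qPoch q q (j + r) / (qPoch q q r * qPoch q q j) := by
  rw [qBinom, Nat.add_sub_cancel]

lemma qBinom_zero_right (hq : ‖q‖ < 1) (m : ℕ) : qBinom q m 0 = 1 := by
  rw [qBinom, qPoch_zero, one_mul, Nat.sub_zero, div_self (qPoch_ne_zero hq hq.le m)]

lemma qBinom_mul_qPoch (hq : ‖q‖ < 1) (j r : ℕ) :
    qBinom q (j + r) r * qPoch q q r = qPoch (q ^ (j + 1)) q r := by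
  have hr := qPoch_ne_zero hq hq.le r
  have hj := qPoch_ne_zero hq hq.le j
  rw [qBinom_add_left, qPoch_self_add]
  field_simp

lemma qBinom_succ_succ (hq : ‖q‖ < 1) (j r : ℕ) :
    qBinom q (j + 1 + (r + 1)) (r + 1)
      = qBinom q (j + 1 + r) r + q ^ (r + 1) * qBinom q (j + (r + 1)) (r + 1) := by
  have hjr := qPoch_ne_zero hq hq.le (j + r + 1)
  have hr := qPoch_ne_zero hq hq.le r
  have hj := qPoch_ne_zero hq hq.le j
  have hr' := one_sub_mul_pow_ne_zero hq hq.le r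
  have hj' := one_sub_mul_pow_ne_zero hq hq.le j
  rw [qBinom_add_left, qBinom_add_left, qBinom_add_left,
    show j + 1 + (r + 1) = j + r + 1 + 1 by ring, show j + 1 + r = j + r + 1 by ring,
    show j + (r + 1) = j + r + 1 by ring, qPoch_succ q q (j + r + 1), qPoch_succ q q r,
    qPoch_succ q q j]
  field_simp
  ring

lemma exists_norm_qBinom_le (hq : ‖q‖ < 1) (j : ℕ) :
    ∃ B, ∀ r, ‖qBinom q (j + r) r‖ ≤ B := by
  obtain ⟨C, hC⟩ := exists_norm_inv_qPoch_le hq hq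
  refine ⟨Real.exp (‖q‖ / (1 - ‖q‖)) * (C * C), fun r => ?_⟩
  rw [qBinom_add_left, div_eq_mul_inv, mul_inv, norm_mul, norm_mul]
  exact mul_le_mul (norm_qPoch_le hq q _) (mul_le_mul (hC r) (hC j) (norm_nonneg _)
    ((norm_nonneg _).trans (hC r))) (by positivity) (Real.exp_pos _).le

lemma summable_qBinom_mul_pow (hq : ‖q‖ < 1) (j : ℕ) (hx : ‖x‖ < 1) :
    Summable fun r : ℕ => qBinom q (j + r) r * x ^ r := by
  obtain ⟨B, hB⟩ := exists_norm_qBinom_le hq j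
  refine .of_norm_bounded ((summable_geometric_of_lt_one (norm_nonneg x) hx).mul_left B)
    fun r => ?_
  rw [norm_mul, norm_pow]
  exact mul_le_mul_of_nonneg_right (hB r) (pow_nonneg (norm_nonneg x) r)

theorem tsum_qBinom_mul_pow_mul_qPoch (hq : ‖q‖ < 1) (j : ℕ) (hx : ‖x‖ < 1) :
    (∑' r : ℕ, qBinom q (j + r) r * x ^ r) * qPoch x q (j + 1) = 1 := by
  induction j generalizing x with
  | zero =>
    have hx1 : 1 - x ≠ 0 := by simpa using one_sub_mul_pow_ne_zero (q := q) hx hq.le 0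
    simp only [qBinom_add_left]
    simp [div_self (qPoch_ne_zero hq hq.le _), tsum_geometric_of_norm_lt_one hx, hx1, qPoch_succ,
      qPoch_zero]
  | succ j ih =>
    have hqx := norm_mul_lt_one hq.le hx
    have hs := summable_qBinom_mul_pow hq (j + 1) hx
    have hs' := summable_qBinom_mul_pow hq j hqx
    have hs'' := (summable_nat_add_iff 1).2 hs'
    have hshift : ∑' r : ℕ, qBinom q (j + 1 + (r + 1)) (r + 1) * x ^ (r + 1)
        = x * ∑' r : ℕ, qBinom q (j + 1 + r) r * x ^ r
          + ∑' r : ℕ, qBinom q (j + (r + 1)) (r + 1) * (q * x) ^ (r + 1) := by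
      rw [← tsum_mul_left, ← (hs.mul_left x).tsum_add hs'']
      exact tsum_congr fun r => by rw [qBinom_succ_succ hq]; ring
    have hmul : (∑' r : ℕ, qBinom q (j + 1 + r) r * x ^ r) * (1 - x)
        = ∑' r : ℕ, qBinom q (j + r) r * (q * x) ^ r := by
      have h1 := hs.tsum_eq_zero_add
      have h2 := hs'.tsum_eq_zero_add
      rw [hshift] at h1
      simp only [add_zero, qBinom_zero_right hq, pow_zero, mul_one] at h1 h2
      linear_combination h1 - h2
    have hsplit : qPoch x q (j + 1 + 1) = (1 - x) * qPoch (q * x) q (j + 1) := by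
      rw [show j + 1 + 1 = 1 + (j + 1) by ring, qPoch_add, mul_comm x]
      simp [qPoch_succ, qPoch_zero]
    rw [hsplit, ← mul_assoc, hmul, ih hqx]

lemma tsum_qBinom_mul_pow_eq_inv (hq : ‖q‖ < 1) (j : ℕ) (hx : ‖x‖ < 1) :
    ∑' r : ℕ, qBinom q (j + r) r * x ^ r = (qPoch x q (j + 1))⁻¹ :=
  eq_inv_of_mul_eq_one_left (tsum_qBinom_mul_pow_mul_qPoch hq j hx)

end QBinomial

section QPochSeries

variable {a q x : ℂ}

noncomputable def qPochSeries (a q x : ℂ) : ℂ := ∑' r : ℕ, x ^ r * qPoch a q r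

lemma summable_pow_mul_qPoch (hq : ‖q‖ < 1) (a : ℂ) (hx : ‖x‖ < 1) :
    Summable fun r : ℕ => x ^ r * qPoch a q r :=
  .of_norm_bounded ((summable_geometric_of_lt_one (norm_nonneg x) hx).mul_right _) fun r => by
    rw [norm_mul, norm_pow]
    exact mul_le_mul_of_nonneg_left (norm_qPoch_le hq a r) (pow_nonneg (norm_nonneg x) r)

lemma norm_qPochSeries_le (hq : ‖q‖ < 1) (a : ℂ) (hx : ‖x‖ < 1) :
    ‖qPochSeries a q x‖ ≤ (1 - ‖x‖)⁻¹ * Real.exp (‖a‖ / (1 - ‖q‖)) := by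
  have hg := (summable_geometric_of_lt_one (norm_nonneg x) hx).mul_right
    (Real.exp (‖a‖ / (1 - ‖q‖)))
  rw [← tsum_geometric_of_lt_one (norm_nonneg x) hx, ← tsum_mul_right]
  refine tsum_of_norm_bounded hg.hasSum fun r => ?_
  rw [norm_mul, norm_pow]
  exact mul_le_mul_of_nonneg_left (norm_qPoch_le hq a r) (pow_nonneg (norm_nonneg x) r)

lemma norm_qPochSeries_pow_succ_le (hq : ‖q‖ < 1) (n : ℕ) :
    ‖qPochSeries (q ^ (n + 1)) q (q ^ (n + 1))‖
      ≤ (1 - ‖q‖)⁻¹ * Real.exp (‖q‖ / (1 - ‖q‖)) := by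
  have hqn : ‖q ^ (n + 1)‖ ≤ ‖q‖ := by
    rw [norm_pow]
    exact pow_le_of_le_one (norm_nonneg q) hq.le n.succ_ne_zero
  have hq' : 0 < 1 - ‖q‖ := sub_pos.2 hq
  refine (norm_qPochSeries_le hq _ (hqn.trans_lt hq)).trans ?_
  exact mul_le_mul (inv_anti₀ hq' (by linarith)) (Real.exp_le_exp.2 (by gcongr))
    (Real.exp_pos _).le (inv_nonneg.2 hq'.le)

lemma qPochSeries_eq_one_add (hq : ‖q‖ < 1) (hx : ‖x‖ < 1) :
    qPochSeries a q x = 1 + x * (1 - a) * qPochSeries (a * q) q x := by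
  rw [qPochSeries, (summable_pow_mul_qPoch hq a hx).tsum_eq_zero_add, qPochSeries,
    ← tsum_mul_left]
  congr 1
  · simp [qPoch_zero]
  · refine tsum_congr fun r => ?_
    rw [add_comm r, qPoch_add]
    simp only [qPoch_succ, qPoch_zero, pow_one]
    ring

lemma one_sub_mul_qPochSeries (hq : ‖q‖ < 1) (hx : ‖x‖ < 1) :
    (1 - x) * qPochSeries a q x = 1 - a * x * qPochSeries a q (x * q) := by
  have hs := summable_pow_mul_qPoch hq a hx
  have hs' := summable_pow_mul_qPoch (x := x * q) hq a (mul_comm q x ▸ norm_mul_lt_one hq.le hx)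
  have hshift : ∑' r : ℕ, x ^ (r + 1) * qPoch a q (r + 1)
      = x * qPochSeries a q x - a * x * qPochSeries a q (x * q) := by
    rw [qPochSeries, qPochSeries, ← tsum_mul_left, ← tsum_mul_left,
      ← (hs.mul_left _).tsum_sub (hs'.mul_left _)]
    exact tsum_congr fun r => by rw [qPoch_succ, mul_pow]; ring
  have h : qPochSeries a q x = _ := hs.tsum_eq_zero_add
  rw [hshift] at h
  simp only [pow_zero, qPoch_zero, mul_one] at h
  linear_combination h

lemma qPochSeries_pow_succ (hq : ‖q‖ < 1) (j : ℕ) :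
    qPochSeries (q ^ (j + 1)) q (q ^ (j + 1))
      = 1 + q ^ (j + 1) - q ^ (3 * j + 4) * qPochSeries (q ^ (j + 2)) q (q ^ (j + 2)) := by
  have h1 := one_sub_mul_qPochSeries (a := q ^ (j + 1)) hq (norm_pow_succ_lt_one hq j)
  have h2 := qPochSeries_eq_one_add (a := q ^ (j + 1)) hq (norm_pow_succ_lt_one hq (j + 1))
  have hne : 1 - q ^ (j + 1) ≠ 0 := by
    simpa using one_sub_mul_pow_ne_zero (norm_pow_succ_lt_one hq j) hq.le 0
  rw [← pow_succ] at h1 h2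
  rw [h2] at h1
  refine mul_left_cancel₀ hne ?_
  linear_combination h1

end QPochSeries

section Fubini

variable {q : ℂ}

theorem tprod_mul_tsum_pow_div_qPoch_mul_qPoch (hq : ‖q‖ < 1) (j : ℕ) :
    (∏' l : ℕ, (1 - q ^ (l + 1))) *
        ∑' m : ℕ, q ^ m / (qPoch q q m * qPoch (q ^ (j + m + 1)) q (j + 1))
      = qPochSeries (q ^ (j + 1)) q (q ^ (j + 1)) := by
  set term : ℕ → ℕ → ℂ := fun m r =>
    q ^ m / qPoch q q m * (qBinom q (j + r) r * (q ^ (j + m + 1)) ^ r)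
  have hrow : ∀ m, q ^ m / (qPoch q q m * qPoch (q ^ (j + m + 1)) q (j + 1)) = ∑' r, term m r :=
    fun m => by rw [tsum_mul_left, tsum_qBinom_mul_pow_eq_inv hq j (norm_pow_succ_lt_one hq _),
      div_mul_eq_div_div, div_eq_mul_inv]
  have hcol : ∀ r, ∑' m, term m r
      = qBinom q (j + r) r * (q ^ (j + 1)) ^ r * ∑' m : ℕ, (q ^ (r + 1)) ^ m / qPoch q q m := by
    intro r
    rw [← tsum_mul_left]
    refine tsum_congr fun m => ?_
    have hexp : q ^ m * (q ^ (j + m + 1)) ^ r = (q ^ (j + 1)) ^ r * (q ^ (r + 1)) ^ m := by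
      simp only [← pow_mul, ← pow_add]; ring_nf
    calc term m r = qBinom q (j + r) r * (q ^ m * (q ^ (j + m + 1)) ^ r) / qPoch q q m := by ring
      _ = _ := by rw [hexp]; ring
  have hsum : Summable (Function.uncurry term) := by
    obtain ⟨C, hC⟩ := exists_norm_inv_qPoch_le hq hq
    obtain ⟨B, hB⟩ := exists_norm_qBinom_le hq j
    have hg := summable_geometric_of_lt_one (norm_nonneg q) hq
    have hC0 : 0 ≤ C := (norm_nonneg _).trans (hC 0)
    have hB0 : 0 ≤ B := (norm_nonneg _).trans (hB 0)
    refine .of_norm_bounded ((hg.mul_left C).mul_of_nonneg (hg.mul_left B) (fun m => by positivity)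
      fun r => by positivity) fun ⟨m, r⟩ => ?_
    simp only [Function.uncurry, term, div_eq_mul_inv, norm_mul, norm_pow]
    rw [show C * ‖q‖ ^ m * (B * ‖q‖ ^ r) = ‖q‖ ^ m * C * (B * ‖q‖ ^ r) by ring]
    gcongr
    exacts [hC m, hB r, pow_le_of_le_one (norm_nonneg q) hq.le (by omega)]
  rw [qPochSeries, tsum_congr hrow, ← hsum.tsum_comm, tsum_congr hcol, ← tsum_mul_left]
  refine tsum_congr fun r => ?_
  rw [mul_left_comm, tprod_mul_tsum_pow_succ_div_qPoch hq r, mul_right_comm, qBinom_mul_qPoch hq,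
    mul_comm]

end Fubini

lemma eq_of_sub_succ_eq_of_tendsto_zero {E : Type*} [AddCommGroup E] [TopologicalSpace E]
    [IsTopologicalAddGroup E] [T2Space E] {f g : ℕ → E}
    (h : ∀ n, f n - f (n + 1) = g n - g (n + 1)) (hf : Tendsto f atTop (𝓝 0))
    (hg : Tendsto g atTop (𝓝 0)) (n : ℕ) : f n = g n := by
  have hconst : ∀ n, f n - g n = f 0 - g 0 := fun n => by
    induction n with
    | zero => rfl
    | succ n ih => exact (sub_eq_sub_iff_sub_eq_sub.1 (h n)).symm.trans ih
  have hlim : f 0 - g 0 = 0 := by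
    refine tendsto_nhds_unique ?_ (sub_zero (0 : E) ▸ hf.sub hg)
    simp only [hconst, tendsto_const_nhds]
  rw [← sub_eq_zero, hconst, hlim]

section TailSum

variable {E : Type*} [NormedAddCommGroup E] {f : ℤ → E}

noncomputable def tailSum (f : ℤ → E) (n : ℕ) : E :=
  ∑' k : ℤ, if (n : ℤ) < |k| then f k else 0

lemma summable_norm_ite_lt_abs (hf : Summable fun k => ‖f k‖) (n : ℕ) :
    Summable fun k : ℤ => ‖if (n : ℤ) < |k| then f k else 0‖ :=
  hf.of_nonneg_of_le (fun _ => norm_nonneg _) fun k => by split_ifs <;> simp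

variable [CompleteSpace E]

lemma tailSum_sub_tailSum_succ (hf : Summable fun k => ‖f k‖) (n : ℕ) :
    tailSum f n - tailSum f (n + 1) = f (n + 1) + f (-(n + 1)) := by
  rw [tailSum, tailSum, ← (summable_norm_ite_lt_abs hf n).of_norm.tsum_sub
    (summable_norm_ite_lt_abs hf (n + 1)).of_norm,
    tsum_eq_sum (s := {(n : ℤ) + 1, -((n : ℤ) + 1)}), Finset.sum_pair (by omega)]
  · push_cast
    simp only [abs_neg, abs_of_nonneg (by positivity : (0 : ℤ) ≤ n + 1), lt_add_one,
      lt_irrefl, if_true, if_false, sub_zero]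
  · intro k hk
    simp only [Finset.mem_insert, Finset.mem_singleton] at hk
    push_cast
    rw [Int.abs_eq_natAbs]
    split_ifs <;> first | exact sub_self _ | omega

lemma tendsto_tailSum (hf : Summable fun k => ‖f k‖) : Tendsto (tailSum f) atTop (𝓝 0) := by
  rw [← tsum_zero (β := ℤ)]
  refine tendsto_tsum_of_dominated_convergence hf (fun k => ?_) (.of_forall fun n k => ?_)
  · refine tendsto_const_nhds.congr' ?_
    filter_upwards [eventually_ge_atTop k.natAbs] with n hn
    rw [if_neg (by rw [Int.abs_eq_natAbs]; omega)]
  · split_ifs <;> simp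

end TailSum

section PentagonalTail

variable {q : ℂ}

noncomputable def pentagonalTerm (q : ℂ) (k : ℤ) : ℂ := (-1) ^ k * q ^ (k * (3 * k + 1) / 2)

lemma pentagonalTerm_eq (q : ℂ) (k : ℤ) :
    pentagonalTerm q k = (-1) ^ k * q ^ pentagonal (-k) := by
  rw [pentagonalTerm, ← zpow_natCast, natCast_pentagonal]
  ring_nf

lemma norm_pentagonalTerm (q : ℂ) (k : ℤ) :
    ‖pentagonalTerm q k‖ = ‖q‖ ^ pentagonal (-k) := by
  rw [pentagonalTerm_eq, norm_mul, norm_zpow, norm_neg, norm_one, one_zpow, one_mul, norm_pow]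

lemma summable_norm_pentagonalTerm (hq : ‖q‖ < 1) :
    Summable fun k => ‖pentagonalTerm q k‖ := by
  simp only [norm_pentagonalTerm]
  exact (summable_geometric_of_lt_one (norm_nonneg q) hq).comp_injective
    (pentagonal_injective.comp neg_injective)

lemma pentagonal_neg_natCast_add_one (n : ℕ) :
    pentagonal (-((n : ℤ) + 1)) = pentagonal ((n : ℤ) + 1) + (n + 1) := by
  have h1 := two_mul_natCast_pentagonal_neg ((n : ℤ) + 1)
  have h2 := two_mul_natCast_pentagonal ((n : ℤ) + 1)
  zify
  linarith

lemma pentagonal_natCast_add_two (n : ℕ) :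
    pentagonal ((n : ℤ) + 1 + 1) = pentagonal ((n : ℤ) + 1) + (3 * n + 4) := by
  have h1 := two_mul_natCast_pentagonal ((n : ℤ) + 1 + 1)
  have h2 := two_mul_natCast_pentagonal ((n : ℤ) + 1)
  zify
  linarith

lemma le_pentagonal_natCast_add_one (n : ℕ) : n ≤ pentagonal ((n : ℤ) + 1) := by
  have h := two_mul_natCast_pentagonal ((n : ℤ) + 1)
  zify
  nlinarith

lemma pentagonalTerm_add_pentagonalTerm_neg (q : ℂ) (n : ℕ) :
    pentagonalTerm q (n + 1) + pentagonalTerm q (-(n + 1))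
      = (-1) ^ (n + 1) *
          (q ^ pentagonal ((n : ℤ) + 1) + q ^ pentagonal ((n : ℤ) + 1) * q ^ (n + 1)) := by
  have hsign : (-1 : ℂ) ^ (-((n : ℤ) + 1)) = (-1) ^ (n + 1) := by
    rw [zpow_neg, ← inv_zpow, inv_neg, inv_one]; norm_cast
  rw [pentagonalTerm_eq, pentagonalTerm_eq, neg_neg, pentagonal_neg_natCast_add_one, pow_add, hsign]
  norm_cast
  ring

theorem tailSum_pentagonalTerm (hq : ‖q‖ < 1) (j : ℕ) :
    tailSum (pentagonalTerm q) j
      = (-1) ^ (j + 1) * q ^ pentagonal ((j : ℤ) + 1) *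
          qPochSeries (q ^ (j + 1)) q (q ^ (j + 1)) := by
  refine eq_of_sub_succ_eq_of_tendsto_zero (g := fun n : ℕ => (-1) ^ (n + 1) *
    q ^ pentagonal ((n : ℤ) + 1) * qPochSeries (q ^ (n + 1)) q (q ^ (n + 1))) (fun n => ?_)
    (tendsto_tailSum (summable_norm_pentagonalTerm hq)) ?_ j
  · rw [tailSum_sub_tailSum_succ (summable_norm_pentagonalTerm hq),
      pentagonalTerm_add_pentagonalTerm_neg, qPochSeries_pow_succ hq]
    push_cast
    rw [pentagonal_natCast_add_two]
    ring
  · set K := (1 - ‖q‖)⁻¹ * Real.exp (‖q‖ / (1 - ‖q‖))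
    refine squeeze_zero_norm (a := fun n => K * ‖q‖ ^ n) (fun n => ?_) (by
      simpa using (tendsto_pow_atTop_nhds_zero_of_lt_one (norm_nonneg q) hq).const_mul K)
    rw [norm_mul, norm_mul, norm_pow, norm_neg, norm_one, one_pow, one_mul, norm_pow, mul_comm K]
    exact mul_le_mul (pow_le_pow_of_le_one (norm_nonneg q) hq.le (le_pentagonal_natCast_add_one n))
      (norm_qPochSeries_pow_succ_le hq n) (norm_nonneg _) (pow_nonneg (norm_nonneg q) n)

end PentagonalTail

section Summand

variable {q : ℂ}

lemma zpow_neg_mul_ediv_two_mul_pow (hq : q ≠ 0) (j m : ℕ) :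
    q ^ (-((((j + m : ℤ) - j) * ((j + m : ℤ) + j - 1)) / 2)) * q ^ ((j + m) * ((j + m) + 1) / 2)
      = q ^ (j * (j + 1) / 2) * q ^ m := by
  rw [← zpow_natCast, ← zpow_natCast, ← zpow_natCast, ← zpow_add₀ hq, ← zpow_add₀ hq]
  congr 1
  have hj := Int.even_mul_succ_self (j : ℤ)
  have hm := Int.even_mul_succ_self (m : ℤ)
  rw [Int.even_iff] at hj hm
  push_cast
  ring_nf at hj hm ⊢
  omega

lemma zpow_neg_sq_sub_mul_pow_pentagonal (hq : q ≠ 0) (j : ℕ) :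
    (q ^ (-((j : ℤ) ^ 2)) - q ^ (-(((j : ℤ) + 1) ^ 2))) *
        ((-1) ^ (j + 1) * q ^ pentagonal ((j : ℤ) + 1))
      = (-1) ^ j * q ^ (j * (j + 1) / 2) * (1 - q ^ (2 * j + 1)) := by
  have hp := two_mul_natCast_pentagonal ((j : ℤ) + 1)
  have hj := Int.even_mul_succ_self (j : ℤ)
  rw [Int.even_iff] at hj
  have e1 : q ^ (-((j : ℤ) ^ 2)) * q ^ pentagonal ((j : ℤ) + 1)
      = q ^ (j * (j + 1) / 2 + (2 * j + 1)) := by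
    rw [← zpow_natCast, ← zpow_natCast, ← zpow_add₀ hq]
    congr 1
    push_cast
    ring_nf at hj hp ⊢
    omega
  have e2 : q ^ (-(((j : ℤ) + 1) ^ 2)) * q ^ pentagonal ((j : ℤ) + 1)
      = q ^ (j * (j + 1) / 2) := by
    rw [← zpow_natCast, ← zpow_natCast, ← zpow_add₀ hq]
    congr 1
    push_cast
    ring_nf at hj hp ⊢
    omega
  linear_combination (-1) ^ (j + 1) * e1 - (-1) ^ (j + 1) * e2

lemma surgery_summand_eq (hq0 : q ≠ 0) (hq : ‖q‖ < 1) (j m : ℕ) :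
    (-1 : ℂ) ^ (j + m + j) *
        q ^ (-((((j + m : ℤ) - j) * ((j + m : ℤ) + j - 1)) / 2)) *
        qBinom q (2 * (j + m)) ((j + m) - j) *
        (qInt q (2 * j + 1) / qInt q ((j + m) + j + 1)) *
        ((-1 : ℂ) ^ (j + m) * q ^ ((j + m) * ((j + m) + 1) / 2) /
          qPoch (q ^ ((j + m) + 1)) q (j + m))
      = (-1) ^ j * q ^ (j * (j + 1) / 2) * (1 - q ^ (2 * j + 1)) *
          (q ^ m / (qPoch q q m * qPoch (q ^ (j + m + 1)) q (j + 1))) := by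
  have hsign : (-1 : ℂ) ^ (j + m + j) * (-1) ^ (j + m) = (-1) ^ j := by
    rw [← pow_add, show j + m + j + (j + m) = j + 2 * (j + m) by ring, pow_add, pow_mul]
    simp
  have hbinom : qBinom q (2 * (j + m)) ((j + m) - j)
      = qPoch q q (j + m) * qPoch (q ^ (j + m + 1)) q (j + m)
          / (qPoch q q m * qPoch q q (2 * j + m)) := by
    rw [qBinom, Nat.add_sub_cancel_left, show 2 * (j + m) - m = 2 * j + m by omega, two_mul,
      qPoch_self_add]
  have hden : qPoch q q (2 * j + m) * (1 - q ^ (2 * j + m + 1))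
      = qPoch q q (j + m) * qPoch (q ^ (j + m + 1)) q (j + 1) := by
    rw [← qPoch_self_add, show j + m + (j + 1) = 2 * j + m + 1 by ring, qPoch_succ, ← pow_succ']
  have h1q : (1 : ℂ) - q ≠ 0 := by simpa using one_sub_mul_pow_ne_zero hq hq.le 0
  have hu : 1 - q ^ (2 * j + m + 1) ≠ 0 := by
    simpa [← pow_succ'] using one_sub_mul_pow_ne_zero hq hq.le (2 * j + m)
  have hM := qPoch_ne_zero hq hq.le m
  have hA := qPoch_ne_zero hq hq.le (j + m)
  have hE := qPoch_ne_zero hq hq.le (2 * j + m)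
  have hD := qPoch_ne_zero (norm_pow_succ_lt_one hq (j + m)) hq.le (j + m)
  have hB := qPoch_ne_zero (norm_pow_succ_lt_one hq (j + m)) hq.le (j + 1)
  rw [hbinom, qInt, qInt, show j + m + j + 1 = 2 * j + m + 1 by ring]
  calc _ = (-1 : ℂ) ^ (j + m + j) * (-1) ^ (j + m) *
        (q ^ (-((((j + m : ℤ) - j) * ((j + m : ℤ) + j - 1)) / 2)) *
          q ^ ((j + m) * ((j + m) + 1) / 2)) *
        (1 - q ^ (2 * j + 1)) * (qPoch q q (j + m) /
          (qPoch q q m * (qPoch q q (2 * j + m) * (1 - q ^ (2 * j + m + 1))))) := by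
        field_simp
    _ = _ := by
        rw [hsign, zpow_neg_mul_ediv_two_mul_pow hq0, hden]
        field_simp

lemma summable_norm_pow_div_qPoch_mul_qPoch (hq : ‖q‖ < 1) (j : ℕ) :
    Summable fun m : ℕ => ‖q ^ m / (qPoch q q m * qPoch (q ^ (j + m + 1)) q (j + 1))‖ := by
  obtain ⟨C, hC⟩ := exists_norm_inv_qPoch_le hq hq
  have hC0 : 0 ≤ C := (norm_nonneg _).trans (hC 0)
  refine ((summable_geometric_of_lt_one (norm_nonneg q) hq).mul_left
    (C * (Real.exp (‖q‖ / (1 - ‖q‖)) * C))).of_nonneg_of_le (fun _ => norm_nonneg _)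
    fun m => ?_
  have hA := qPoch_ne_zero hq hq.le (j + m)
  have hsplit : q ^ m / (qPoch q q m * qPoch (q ^ (j + m + 1)) q (j + 1))
      = q ^ m * (qPoch q q m)⁻¹ * (qPoch q q (j + m) * (qPoch q q (j + m + (j + 1)))⁻¹) := by
    rw [qPoch_self_add q (j + m) (j + 1)]
    field_simp
  rw [hsplit, norm_mul, norm_mul, norm_mul, norm_pow]
  calc _ ≤ ‖q‖ ^ m * C * (Real.exp (‖q‖ / (1 - ‖q‖)) * C) := by
        gcongr
        exacts [hC m, norm_qPoch_le hq q _, hC _]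
    _ = _ := by ring

end Summand

/-- Coefficient identity underlying the regularized `+1`-surgery formula: for `0 < |q| < 1`,
`∑_{i≥j} (−1)^{i+j} q^{−(i−j)(i+j−1)/2} C_q(2i,i−j) ([2j+1]_q/[i+j+1]_q)
  (−1)^i q^{i(i+1)/2}/(q^{i+1};q)_i
 = (q^{−j²} − q^{−(j+1)²}) (∑_{|k|>j} (−1)^k q^{k(3k+1)/2}) / (q;q)_∞`,
with both the `i`-series (indexed by `i = j + m`, `m ≥ 0`) and the theta series
converging absolutely. -/
theorem regularized_plus_one_surgery_coefficient (j : ℕ) (q : ℂ)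
    (hq0 : 0 < ‖q‖) (hq1 : ‖q‖ < 1) :
    Summable (fun m : ℕ =>
      ‖(-1 : ℂ) ^ (j + m + j) *
        q ^ (-((((j + m : ℤ) - j) * ((j + m : ℤ) + j - 1)) / 2)) *
        qBinom q (2 * (j + m)) ((j + m) - j) *
        (qInt q (2 * j + 1) / qInt q ((j + m) + j + 1)) *
        ((-1 : ℂ) ^ (j + m) * q ^ ((j + m) * ((j + m) + 1) / 2) /
          qPoch (q ^ ((j + m) + 1)) q (j + m))‖) ∧
    Summable (fun k : ℤ =>
      ‖(if (j : ℤ) < |k| then (-1 : ℂ) ^ k * q ^ (k * (3 * k + 1) / 2) else 0)‖) ∧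
    ∑' m : ℕ, (-1 : ℂ) ^ (j + m + j) *
        q ^ (-((((j + m : ℤ) - j) * ((j + m : ℤ) + j - 1)) / 2)) *
        qBinom q (2 * (j + m)) ((j + m) - j) *
        (qInt q (2 * j + 1) / qInt q ((j + m) + j + 1)) *
        ((-1 : ℂ) ^ (j + m) * q ^ ((j + m) * ((j + m) + 1) / 2) /
          qPoch (q ^ ((j + m) + 1)) q (j + m))
      = (q ^ (-((j : ℤ) ^ 2)) - q ^ (-(((j : ℤ) + 1) ^ 2))) *
          (∑' k : ℤ, if (j : ℤ) < |k| then (-1 : ℂ) ^ k * q ^ (k * (3 * k + 1) / 2) else 0) /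
          ∏' l : ℕ, (1 - q ^ (l + 1)) := by
  have hq : q ≠ 0 := norm_pos_iff.1 hq0
  have hP : ∏' l : ℕ, (1 - q ^ (l + 1)) ≠ 0 := by
    simpa only [← pow_succ'] using tprod_one_sub_mul_pow_ne_zero hq1 hq1
  simp only [surgery_summand_eq hq hq1, norm_mul (_ * _ * _)]
  refine ⟨(summable_norm_pow_div_qPoch_mul_qPoch hq1 j).mul_left _,
    summable_norm_ite_lt_abs (summable_norm_pentagonalTerm hq1) j, ?_⟩
  change _ = _ * tailSum (pentagonalTerm q) j / _
  rw [tsum_mul_left, tailSum_pentagonalTerm hq1, eq_div_iff hP]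
  linear_combination (-1) ^ j * q ^ (j * (j + 1) / 2) * (1 - q ^ (2 * j + 1)) *
      tprod_mul_tsum_pow_div_qPoch_mul_qPoch hq1 j -
    qPochSeries (q ^ (j + 1)) q (q ^ (j + 1)) * zpow_neg_sq_sub_mul_pow_pentagonal hq j
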